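/- arXiv:2503.05166 — 5 statements merged into one kernel-verified Lean document; each statement's English description precedes it below -/
import Mathlib

section
/- Let k ≥ 1 and n ≥ k be integers, and for an integer n₀ with 0 ≤ n₀ ≤ n set g(n₀) = n₀·(n−n₀) + ⌊(k−1)·n₀/2⌋. Then the maximum of g over integers n₀ ∈ [0,n] (whose value is f(n,k)) is attained at n₀ = (2n+k−1)/4 if 2n+k ≡ 1 (mod 4); at n₀ = (2n+k−2)/4 if 2n+k ≡ 2 (mod 4); at both n₀ = (2n+k−3)/4 and n₀ = (2n+k+1)/4 if 2n+k ≡ 3 (mod 4); and at n₀ = (2n+k)/4 if 2n+k ≡ 0 (mod 4). In particular, the maximum is always attained at n₀ = ⌊(2n+k)/4⌋. -/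
/-- `f(n,k) = max{ n₀·n₁ + ⌊(k−1)·n₀/2⌋ : n₀ + n₁ = n }`. -/
def turanF (n k : ℕ) : ℕ :=
  (Finset.range (n + 1)).sup (fun n₀ => n₀ * (n - n₀) + (k - 1) * n₀ / 2)

private lemma castg (k n j : ℕ) (hk : 1 ≤ k) (hj : j ≤ n) :
    ((2 * (j * (n - j) + (k - 1) * j / 2) : ℕ) : ℤ)
      = (2*(n:ℤ)+k-1)*j - 2*(j:ℤ)^2 - (((k-1)*j % 2 : ℕ) : ℤ) := by
  have h2 : 2 * ((k-1)*j / 2) = (k-1)*j - (k-1)*j % 2 := by omega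
  have hmod : (k-1)*j % 2 ≤ (k-1)*j := Nat.mod_le _ _
  have : 2 * (j * (n - j) + (k - 1) * j / 2)
      = 2 * (j * (n-j)) + ((k-1)*j - (k-1)*j % 2) := by omega
  rw [this]
  push_cast [Nat.cast_sub hmod, Nat.cast_sub hj, Nat.cast_sub hk]
  ring

private lemma key (k n M m : ℕ) (hk : 1 ≤ k) (hm : m ≤ n) (hM : M ≤ n)
    (H : (((k-1)*M % 2 : ℕ) : ℤ) - (((k-1)*m % 2 : ℕ) : ℤ) ≤
      ((2*(n:ℤ)+k-1)*M - 2*(M:ℤ)^2) - ((2*(n:ℤ)+k-1)*m - 2*(m:ℤ)^2)) :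
    m * (n - m) + (k - 1) * m / 2 ≤ M * (n - M) + (k - 1) * M / 2 := by
  have cm := castg k n m hk hm
  have cM := castg k n M hk hM
  have h : ((2 * (m * (n - m) + (k - 1) * m / 2) : ℕ) : ℤ)
      ≤ ((2 * (M * (n - M) + (k - 1) * M / 2) : ℕ) : ℤ) := by linarith
  have h' : 2 * (m * (n - m) + (k - 1) * m / 2)
      ≤ 2 * (M * (n - M) + (k - 1) * M / 2) := by exact_mod_cast h
  omega

private lemma quad (M m r eM em : ℤ) (h1M : eM ≤ 1) (h0m : 0 ≤ em)
    (heq : M = m → eM = em) (hr0 : -1 ≤ r) (hr3 : r ≤ 3)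
    (h3 : r = 3 ∨ r = -1 → eM = 0 ∧ em = 0) :
    eM - em ≤ (M - m) * (2*(M - m) + r - 1) := by
  rcases eq_or_ne M m with h | h
  · rw [heq h, h]; ring_nf; simp
  · have hd : 1 ≤ M - m ∨ M - m ≤ -1 := by omega
    by_cases he : r = 3 ∨ r = -1
    · obtain ⟨hA, hB⟩ := h3 he
      rw [hA, hB]
      rcases he with he | he <;> subst he <;> rcases hd with hd | hd <;> nlinarith
    · have hr : 0 ≤ r ∧ r ≤ 2 := by
        constructor <;> omega
      rcases hd with hd | hd <;> nlinarith [hr.1, hr.2]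

private lemma maximizer (k n M : ℕ) (r : ℤ) (hk : 1 ≤ k) (hM : M ≤ n)
    (h4 : 4*(M:ℤ) + r = 2*n + k) (hr0 : -1 ≤ r) (hr3 : r ≤ 3)
    (hodd : r = 3 ∨ r = -1 → k % 2 = 1) :
    ∀ m ≤ n, m * (n - m) + (k - 1) * m / 2 ≤ M * (n - M) + (k - 1) * M / 2 := by
  intro m hm
  apply key k n M m hk hm hM
  have hrew : ((2*(n:ℤ)+k-1)*M - 2*(M:ℤ)^2) - ((2*(n:ℤ)+k-1)*m - 2*(m:ℤ)^2)
      = ((M:ℤ) - m) * (2*((M:ℤ) - m) + r - 1) := by linear_combination ((m:ℤ) - M) * h4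
  rw [hrew]
  have hzero : ∀ x : ℕ, k % 2 = 1 → (k-1)*x % 2 = 0 := by
    intro x hkk
    have h1 : (k-1) % 2 = 0 := by omega
    rw [Nat.mul_mod, h1]; simp
  apply quad
  · have := Nat.mod_lt ((k-1)*M) (show 0 < 2 by norm_num); exact_mod_cast by omega
  · positivity
  · intro hMm
    have : M = m := by exact_mod_cast hMm
    rw [this]
  · exact hr0
  · exact hr3
  · intro he
    have hkk := hodd he
    rw [hzero M hkk, hzero m hkk]; simp

theorem stmt2 (k n : ℕ) (hk : 1 ≤ k) (hn : k ≤ n)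
    (g : ℕ → ℕ) (hg : ∀ n₀, g n₀ = n₀ * (n - n₀) + (k - 1) * n₀ / 2) :
    ((2 * n + k) % 4 = 1 →
      (2 * n + k - 1) / 4 ≤ n ∧ ∀ m ≤ n, g m ≤ g ((2 * n + k - 1) / 4)) ∧
    ((2 * n + k) % 4 = 2 →
      (2 * n + k - 2) / 4 ≤ n ∧ ∀ m ≤ n, g m ≤ g ((2 * n + k - 2) / 4)) ∧
    ((2 * n + k) % 4 = 3 →
      (2 * n + k - 3) / 4 ≤ n ∧ (2 * n + k + 1) / 4 ≤ n ∧
      (∀ m ≤ n, g m ≤ g ((2 * n + k - 3) / 4)) ∧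
      (∀ m ≤ n, g m ≤ g ((2 * n + k + 1) / 4))) ∧
    ((2 * n + k) % 4 = 0 →
      (2 * n + k) / 4 ≤ n ∧ ∀ m ≤ n, g m ≤ g ((2 * n + k) / 4)) ∧
    ((2 * n + k) / 4 ≤ n ∧ (∀ m ≤ n, g m ≤ g ((2 * n + k) / 4)) ∧
      g ((2 * n + k) / 4) = turanF n k) := by
  have master : ∀ M : ℕ, ∀ r : ℤ, M ≤ n → 4*(M:ℤ) + r = 2*n + k → -1 ≤ r → r ≤ 3 →
      (r = 3 ∨ r = -1 → k % 2 = 1) → ∀ m ≤ n, g m ≤ g M := by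
    intro M r hM h4 hr0 hr3 hodd m hm
    rw [hg, hg]
    exact maximizer k n M r hk hM h4 hr0 hr3 hodd m hm
  refine ⟨?_, ?_, ?_, ?_, ?_⟩
  · intro hr
    have hM4 : 4 * ((2*n+k-1)/4) + 1 = 2*n+k := by omega
    have hM : (2*n+k-1)/4 ≤ n := by omega
    refine ⟨hM, master _ 1 hM (by exact_mod_cast hM4) (by norm_num) (by norm_num)
      (by intro h; rcases h with h | h <;> norm_num at h)⟩
  · intro hr
    have hM4 : 4 * ((2*n+k-2)/4) + 2 = 2*n+k := by omega
    have hM : (2*n+k-2)/4 ≤ n := by omega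
    refine ⟨hM, master _ 2 hM (by exact_mod_cast hM4) (by norm_num) (by norm_num)
      (by intro h; rcases h with h | h <;> norm_num at h)⟩
  · intro hr
    have hodd : k % 2 = 1 := by omega
    have hM4 : 4 * ((2*n+k-3)/4) + 3 = 2*n+k := by omega
    have hM : (2*n+k-3)/4 ≤ n := by omega
    have hM4' : 4 * ((2*n+k+1)/4) = 2*n+k+1 := by omega
    have hM' : (2*n+k+1)/4 ≤ n := by omega
    have h4' : 4 * (((2*n+k+1)/4 : ℕ) : ℤ) + (-1) = 2*n+k := by
      have : (4 * ((2*n+k+1)/4) : ℤ) = ((2*n+k+1 : ℕ) : ℤ) := by exact_mod_cast hM4'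
      push_cast at this ⊢; omega
    refine ⟨hM, hM', master _ 3 hM (by exact_mod_cast hM4) (by norm_num) (by norm_num)
      (fun _ => hodd), master _ (-1) hM' h4' (by norm_num) (by norm_num) (fun _ => hodd)⟩
  · intro hr
    have hM4 : 4 * ((2*n+k)/4) + 0 = 2*n+k := by omega
    have hM : (2*n+k)/4 ≤ n := by omega
    refine ⟨hM, master _ 0 hM (by exact_mod_cast hM4) (by norm_num) (by norm_num)
      (by intro h; rcases h with h | h <;> norm_num at h)⟩
  · have hM4 : 4 * ((2*n+k)/4) + (2*n+k) % 4 = 2*n+k := by omega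
    have hM : (2*n+k)/4 ≤ n := by omega
    have h4 : 4 * (((2*n+k)/4 : ℕ) : ℤ) + (((2*n+k) % 4 : ℕ) : ℤ) = 2*n+k := by
      exact_mod_cast hM4
    have hrlt : (2*n+k) % 4 ≤ 3 := by omega
    have hr3 : (((2*n+k) % 4 : ℕ) : ℤ) ≤ 3 := by exact_mod_cast hrlt
    have hodd : (((2*n+k) % 4 : ℕ) : ℤ) = 3 ∨ (((2*n+k) % 4 : ℕ) : ℤ) = -1 → k % 2 = 1 := by
      intro h
      rcases h with h | h
      · have : (2*n+k) % 4 = 3 := by exact_mod_cast h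
        omega
      · exfalso
        have := Int.natCast_nonneg ((2*n+k) % 4)
        omega
    have hmax := master _ _ hM h4 (le_trans (by norm_num) (Int.natCast_nonneg _)) hr3 hodd
    refine ⟨hM, hmax, ?_⟩
    apply le_antisymm
    · rw [hg, turanF]
      exact Finset.le_sup (f := fun n₀ => n₀ * (n - n₀) + (k - 1) * n₀ / 2)
        (Finset.mem_range.mpr (by omega))
    · rw [turanF]
      apply Finset.sup_le
      intro b hb
      have hb' : b ≤ n := by
        have := Finset.mem_range.mp hb; omega
      simpa [hg] using hmax b hb'
end

section
/- Let k ≥ 2 be an integer and let T be a balanced tree on 2k or 2k+1 vertices. If n is a positive integer such that 2(k−1) divides ⌊(2n+k)/4⌋, then there exists a T̂-free graph on n vertices with exactly f(n,k) edges; in particular ex(n, T̂) ≥ f(n,k). -/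
/-- The suspension `Ĥ` of a graph `H`: a new vertex (`none`) joined to all of `H`. -/
def suspension {V : Type*} (H : SimpleGraph V) : SimpleGraph (Option V) :=
  SimpleGraph.fromRel (fun x y => x = none ∨ ∃ a b, x = some a ∧ y = some b ∧ H.Adj a b)

/-- The Erdős–Sós conjecture holds for the tree `T'`: every graph on `N` vertices with
more than `(|T'|-2)·N/2` edges contains a copy of `T'`. -/
def ErdosSosProperty {m : ℕ} (T' : SimpleGraph (Fin m)) : Prop :=
  ∀ (N : ℕ) (G : SimpleGraph (Fin N)),
    2 * G.edgeSet.ncard > (m - 2) * N → ∃ f : T' →g G, Function.Injective f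

open Finset

lemma Finset.card_filter_fst_eq {α β : Type*} [Fintype α] [Fintype β] [DecidableEq α] (a : α) :
    #{x : α × β | x.1 = a} = Fintype.card β := by
  rw [show ({x : α × β | x.1 = a} : Finset _) = {a} ×ˢ univ by ext ⟨x, y⟩; simp [eq_comm],
    card_product]
  simp

namespace SimpleGraph

variable {V W α β ι : Type*}

def join (G : SimpleGraph α) (H : SimpleGraph β) : SimpleGraph (α ⊕ β) :=
  (G ⊕g H) ⊔ completeBipartiteGraph α β

section Join
variable {G : SimpleGraph α} {H : SimpleGraph β} {a a' : α} {b b' : β}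

@[simp] lemma join_adj_inl_inl : (G.join H).Adj (.inl a) (.inl a') ↔ G.Adj a a' := by simp [join]
@[simp] lemma join_adj_inr_inr : (G.join H).Adj (.inr b) (.inr b') ↔ H.Adj b b' := by simp [join]
@[simp] lemma join_adj_inl_inr : (G.join H).Adj (.inl a) (.inr b) := by simp [join]
@[simp] lemma join_adj_inr_inl : (G.join H).Adj (.inr b) (.inl a) := by simp [join]

instance [DecidableRel G.Adj] [DecidableRel H.Adj] : DecidableRel (G.join H).Adj
  | .inl _, .inl _ => decidable_of_iff' _ join_adj_inl_inl
  | .inr _, .inr _ => decidable_of_iff' _ join_adj_inr_inr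
  | .inl _, .inr _ => .isTrue join_adj_inl_inr
  | .inr _, .inl _ => .isTrue join_adj_inr_inl

variable [Fintype α] [Fintype β] [DecidableRel G.Adj] [DecidableRel H.Adj]

lemma degree_join_inl (a : α) : (G.join H).degree (.inl a) = G.degree a + Fintype.card β := by
  rw [← card_neighborFinset_eq_degree, ← card_neighborFinset_eq_degree, ← card_univ,
    ← card_disjSum]
  congr 1
  ext (x | x) <;> simp

lemma degree_join_inr (b : β) : (G.join H).degree (.inr b) = H.degree b + Fintype.card α := by
  rw [← card_neighborFinset_eq_degree, ← card_neighborFinset_eq_degree, ← card_univ,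
    add_comm, ← card_disjSum]
  congr 1
  ext (x | x) <;> simp

lemma card_edgeFinset_join :
    #(G.join H).edgeFinset =
      #G.edgeFinset + #H.edgeFinset + Fintype.card α * Fintype.card β := by
  have h := sum_degrees_eq_twice_card_edges (G.join H)
  rw [Fintype.sum_sum_type] at h
  simp only [degree_join_inl, degree_join_inr, sum_add_distrib, sum_degrees_eq_twice_card_edges,
    sum_const, card_univ, smul_eq_mul] at h
  linarith

end Join

lemma card_edgeFinset_join_bot [Fintype α] [Fintype β] (G : SimpleGraph α) [DecidableRel G.Adj] :
    #(G.join (⊥ : SimpleGraph β)).edgeFinset = #G.edgeFinset + Fintype.card α * Fintype.card β := by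
  simp [card_edgeFinset_join]

section Connectivity
variable {T : SimpleGraph V}

theorem Preconnected.apply_eq_of_forall_adj (hT : T.Preconnected) {φ : V → ι}
    (hφ : ∀ a b, T.Adj a b → φ a = φ b) (a b : V) : φ a = φ b := by
  obtain ⟨w⟩ := hT a b
  induction w with
  | nil => rfl
  | cons h _ ih => exact (hφ _ _ h).trans ih

theorem Preconnected.forall_iff_or_forall_iff_not (hT : T.Preconnected) {p q : V → Prop}
    (hp : ∀ a b, T.Adj a b → (p a ↔ ¬ p b)) (hq : ∀ a b, T.Adj a b → (q a ↔ ¬ q b)) :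
    (∀ a, p a ↔ q a) ∨ (∀ a, p a ↔ ¬ q a) := by
  by_contra! ⟨⟨a, ha⟩, ⟨b, hb⟩⟩
  have := hT.apply_eq_of_forall_adj (φ := fun a => (p a ↔ q a))
    (fun a b h => propext <| by have := hp a b h; have := hq a b h; tauto) a b
  simp only [eq_iff_iff] at this
  tauto

theorem Preconnected.card_le_card_filter_of_hom [Fintype V] [Fintype W] [DecidableEq ι]
    (hT : T.Preconnected) {G : SimpleGraph W} (f : T →g G) (hf : Function.Injective f)
    (block : W → ι) (hblock : ∀ x y, G.Adj x y → block x = block y) (v : V) :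
    Fintype.card V ≤ #{w | block w = block (f v)} := by
  rw [← card_univ]
  refine card_le_card_of_injOn f (fun a _ => ?_) hf.injOn
  simpa using hT.apply_eq_of_forall_adj (fun a b h => hblock _ _ (f.map_adj h)) a v

end Connectivity

section Suspension
variable {T : SimpleGraph V}

@[simp] lemma suspension_adj_none_some (a : V) : (suspension T).Adj none (some a) := by
  simp [suspension]

@[simp] lemma suspension_adj_some_some {a b : V} :
    (suspension T).Adj (some a) (some b) ↔ T.Adj a b := by
  simp only [suspension, fromRel_adj, ne_eq, Option.some.injEq, reduceCtorEq, false_or,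
    exists_and_left, exists_eq_left']
  exact ⟨fun h => h.2.elim id T.adj_symm, fun h => ⟨h.ne, .inl h⟩⟩

variable [Fintype V] {H : SimpleGraph α} {U : Type*}

lemma exists_card_le_card_filter_of_apex_inr (f : suspension T →g H.join (⊥ : SimpleGraph U))
    (hf : Function.Injective f) (hT : T.Connected) [Fintype α] [DecidableEq ι]
    (block : α → ι) (hblock : ∀ x y, H.Adj x y → block x = block y) {u : U} (hu : f none = .inr u) :
    ∃ i, Fintype.card V ≤ #{x | block x = i} := by
  have hleft (a : V) : ∃ x, f (some a) = .inl x := by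
    have := f.map_adj (suspension_adj_none_some a)
    rw [hu] at this
    cases h : f (some a) with
    | inl x => exact ⟨x, rfl⟩
    | inr _ => simp [h] at this
  choose g hg using hleft
  let g' : T →g H := ⟨g, fun {a b} h => by
    simpa [hg] using f.map_adj (suspension_adj_some_some.2 h)⟩
  have hg' : Function.Injective g' := fun a b h =>
    Option.some_injective _ <| hf <| by rw [hg, hg]; exact congrArg Sum.inl h
  obtain ⟨v⟩ := hT.nonempty
  exact ⟨_, hT.preconnected.card_le_card_filter_of_hom g' hg' block hblock v⟩

lemma card_le_degree_or_card_compl_le_degree_of_apex_inl [DecidableEq V]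
    (f : suspension T →g H.join (⊥ : SimpleGraph U)) (hf : Function.Injective f)
    (hT : T.Preconnected) {A : Finset V} (hA : ∀ a b, T.Adj a b → (a ∈ A ↔ b ∉ A))
    [Fintype α] [DecidableRel H.Adj] (hH : H.CliqueFree 3) {x : α} (hx : f none = .inl x) :
    #A ≤ H.degree x ∨ #Aᶜ ≤ H.degree x := by
  have hnbr (a : V) (ha : (f (some a)).isLeft) :
      f (some a) ∈ (H.neighborFinset x).map .inl := by
    have := f.map_adj (suspension_adj_none_some a)
    rw [hx] at this
    cases h : f (some a) with
    | inl y => simp_all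
    | inr _ => simp [h] at ha
  have hflip (a b : V) (h : T.Adj a b) : ((f (some a)).isLeft ↔ ¬ (f (some b)).isLeft) := by
    have hab := f.map_adj (suspension_adj_some_some.2 h)
    have ha := f.map_adj (suspension_adj_none_some a)
    have hb := f.map_adj (suspension_adj_none_some b)
    rw [hx] at ha hb
    generalize f (some a) = y at ha hab
    generalize f (some b) = z at hb hab
    rcases y with y | _ <;> rcases z with z | _ <;> simp_all
    classical
    exact hH _ (is3Clique_triple_iff.2 ⟨ha, hb, hab⟩)
  have hcard (X : Finset V) (hX : ∀ a ∈ X, (f (some a)).isLeft) : #X ≤ H.degree x :=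
    (card_le_card_of_injOn (f ∘ some) (fun a ha => hnbr a (hX a ha))
      (hf.comp (Option.some_injective _)).injOn).trans (by simp)
  rcases hT.forall_iff_or_forall_iff_not hA hflip with h | h
  · exact .inl (hcard A fun a ha => (h a).1 ha)
  · exact .inr (hcard Aᶜ fun a ha => by simpa using (h a).not.1 (mem_compl.1 ha))

theorem not_exists_injective_hom_suspension_join [DecidableEq V] (hT : T.Connected)
    {A : Finset V} (hA : ∀ a b, T.Adj a b → (a ∈ A ↔ b ∉ A)) [Fintype α] [DecidableRel H.Adj]
    (hH : H.CliqueFree 3) (hdeg : ∀ x, H.degree x < #A ∧ H.degree x < #Aᶜ)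
    [DecidableEq ι] (block : α → ι) (hblock : ∀ x y, H.Adj x y → block x = block y)
    (hfib : ∀ i, #{x | block x = i} < Fintype.card V) (U : Type*) :
    ¬ ∃ f : suspension T →g H.join (⊥ : SimpleGraph U), Function.Injective f := by
  rintro ⟨f, hf⟩
  cases hv : f none with
  | inl x =>
    have := hdeg x
    rcases card_le_degree_or_card_compl_le_degree_of_apex_inl f hf hT.preconnected hA hH hv
      with h | h <;> omega
  | inr u =>
    obtain ⟨i, hi⟩ := exists_card_le_card_filter_of_apex_inr f hf hT block hblock hv
    exact (hfib i).not_ge hi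

end Suspension

section BlockGraph
variable (B S : Type*)

/-- `Fintype.card B` disjoint copies of `K_{S,S}`. -/
def blockGraph : SimpleGraph (B × (S ⊕ S)) := (⊥ : SimpleGraph B) □ (⊥ : SimpleGraph S).join ⊥

variable {B S}

lemma blockGraph_adj {x y : B × (S ⊕ S)} :
    (blockGraph B S).Adj x y ↔ x.1 = y.1 ∧ ((⊥ : SimpleGraph S).join ⊥).Adj x.2 y.2 := by
  simp [blockGraph, boxProd_adj, and_comm]

instance [DecidableEq B] [DecidableEq S] : DecidableRel (blockGraph B S).Adj :=
  fun _ _ => decidable_of_iff' _ blockGraph_adj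

lemma blockGraph_adj_fst {x y : B × (S ⊕ S)} (h : (blockGraph B S).Adj x y) : x.1 = y.1 :=
  (blockGraph_adj.1 h).1

lemma cliqueFree_three_blockGraph : (blockGraph B S).CliqueFree 3 := by
  refine (Coloring.mk (fun x => x.2.isLeft) ?_).colorable.cliqueFree (by simp)
  rintro ⟨_, x | x⟩ ⟨_, y | y⟩ h <;> simp_all [blockGraph_adj]

variable [Fintype B] [Fintype S] [DecidableEq B] [DecidableEq S]

lemma degree_blockGraph (x : B × (S ⊕ S)) : (blockGraph B S).degree x = Fintype.card S := by
  unfold blockGraph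
  rw [degree_boxProd]
  rcases x with ⟨b, y | y⟩ <;> simp [degree_join_inl, degree_join_inr]

lemma card_edgeFinset_blockGraph :
    #(blockGraph B S).edgeFinset = Fintype.card B * Fintype.card S ^ 2 := by
  have h := sum_degrees_eq_twice_card_edges (blockGraph B S)
  simp only [degree_blockGraph, sum_const, card_univ, Fintype.card_prod, Fintype.card_sum,
    smul_eq_mul] at h
  linarith

end BlockGraph

lemma card_edgeFinset_blockGraph_join_bot (b s u : ℕ) :
    #((blockGraph (Fin b) (Fin s)).join (⊥ : SimpleGraph (Fin u))).edgeFinset =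
      2 * s * b * u + s * (2 * s * b) / 2 := by
  rw [card_edgeFinset_join_bot, card_edgeFinset_blockGraph,
    show s * (2 * s * b) = 2 * (b * s ^ 2) by ring, Nat.mul_div_cancel_left _ two_pos]
  simp only [Fintype.card_fin, Fintype.card_prod, Fintype.card_sum]
  ring

end SimpleGraph

open SimpleGraph

lemma exists_fin_suspension_free {V W : Type*} {T : SimpleGraph V} [Fintype W]
    {G : SimpleGraph W} {n : ℕ} (hc : Fintype.card W = n)
    (hG : ¬ ∃ f : suspension T →g G, Function.Injective f) :
    ∃ G' : SimpleGraph (Fin n), (¬ ∃ f : suspension T →g G', Function.Injective f) ∧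
      G'.edgeSet.ncard = G.edgeSet.ncard := by
  let e := G.overFinIso hc
  refine ⟨G.overFin hc, fun ⟨f, hf⟩ => hG ⟨e.symm.toHom.comp f, e.symm.injective.comp hf⟩, ?_⟩
  rw [← Nat.card_coe_set_eq, ← Nat.card_coe_set_eq, Nat.card_congr e.mapEdgeSet]

lemma turanF_succ_eq {n s m : ℕ} (hmn : m ≤ n) (hlo : 4 * m ≤ 2 * n + s + 1)
    (hhi : 2 * n + s + 1 ≤ 4 * m + 3) :
    turanF n (s + 1) = m * (n - m) + s * m / 2 := by
  refine le_antisymm (Finset.sup_le fun j hj => ?_) ?_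
  · have hjn : j ≤ n := Nat.lt_succ_iff.1 (mem_range.1 hj)
    have hmax : 2 * (j * (n - j)) + s * j ≤ 2 * (m * (n - m)) + s * m := by
      zify [hjn, hmn]
      rcases lt_trichotomy j m with h | rfl | h
      · nlinarith [mul_nonneg (by omega : (0:ℤ) ≤ m - j)
          (by omega : (0:ℤ) ≤ 2 * n + s - 2 * (m + j))]
      · rfl
      · nlinarith [mul_nonneg (by omega : (0:ℤ) ≤ j - m)
          (by omega : (0:ℤ) ≤ 2 * (m + j) - (2 * n + s))]
    simp only [add_tsub_cancel_right]
    omega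
  · exact Finset.le_sup (f := fun n₀ => n₀ * (n - n₀) + (s + 1 - 1) * n₀ / 2)
      (mem_range.2 (Nat.lt_succ_of_le hmn))

theorem stmt3_general (k : ℕ) (hk : 2 ≤ k)
    {V : Type} [Fintype V] [DecidableEq V] (T : SimpleGraph V)
    (htree : T.IsTree)
    (hcard : Fintype.card V = 2 * k ∨ Fintype.card V = 2 * k + 1)
    (A : Finset V) (hA : A.card = k)
    (hAind : ∀ x ∈ A, ∀ y ∈ A, ¬ T.Adj x y)
    (hAcind : ∀ x ∈ Aᶜ, ∀ y ∈ Aᶜ, ¬ T.Adj x y)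
    (n : ℕ)
    (hdvd : 2 * (k - 1) ∣ (2 * n + k) / 4) :
    ∃ G : SimpleGraph (Fin n),
      (¬ ∃ f : suspension T →g G, Function.Injective f) ∧
        G.edgeSet.ncard = turanF n k := by
  obtain ⟨s, rfl⟩ : ∃ s, k = s + 1 := ⟨k - 1, by omega⟩
  obtain ⟨b, hb⟩ : 2 * s ∣ (2 * n + (s + 1)) / 4 := by simpa using hdvd
  set m := (2 * n + (s + 1)) / 4
  have hbm : b * (s + s) = m := by rw [hb]; ring
  have hmn : m ≤ n := by
    rcases b with _ | b
    · omega
    · have : 2 * s ≤ m := hb ▸ Nat.le_mul_of_pos_right _ b.succ_pos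
      omega
  have hAc : #Aᶜ = Fintype.card V - (s + 1) := by rw [card_compl, hA]
  have hbip (a b : V) (h : T.Adj a b) : a ∈ A ↔ b ∉ A :=
    ⟨fun ha hb => hAind a ha b hb h,
      fun hb => by_contra fun ha => hAcind a (mem_compl.2 ha) b (mem_compl.2 hb) h⟩
  let G := (blockGraph (Fin b) (Fin s)).join (⊥ : SimpleGraph (Fin (n - m)))
  have hfree : ¬ ∃ f : suspension T →g G, Function.Injective f :=
    not_exists_injective_hom_suspension_join htree.connected hbip cliqueFree_three_blockGraph
      (fun x => by rw [degree_blockGraph, Fintype.card_fin, hA, hAc]; omega) Prod.fst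
      (fun _ _ => blockGraph_adj_fst) (fun i => by rw [card_filter_fst_eq]; simp; omega) _
  obtain ⟨G', hG'free, hG'⟩ := exists_fin_suspension_free (n := n) (by simp; omega) hfree
  refine ⟨G', hG'free, ?_⟩
  rw [hG', ← coe_edgeFinset, Set.ncard_coe_finset, card_edgeFinset_blockGraph_join_bot, ← hb,
    turanF_succ_eq hmn (by omega) (by omega)]

theorem stmt3 (k : ℕ) (hk : 2 ≤ k)
    {V : Type} [Fintype V] [DecidableEq V] (T : SimpleGraph V)
    (htree : T.IsTree)
    (hcard : Fintype.card V = 2 * k ∨ Fintype.card V = 2 * k + 1)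
    (A : Finset V) (hA : A.card = k)
    (hAind : ∀ x ∈ A, ∀ y ∈ A, ¬ T.Adj x y)
    (hAcind : ∀ x ∈ Aᶜ, ∀ y ∈ Aᶜ, ¬ T.Adj x y)
    (n : ℕ) (hn : 0 < n)
    (hdvd : 2 * (k - 1) ∣ (2 * n + k) / 4) :
    ∃ G : SimpleGraph (Fin n),
      (¬ ∃ f : suspension T →g G, Function.Injective f) ∧
        G.edgeSet.ncard = turanF n k :=
  stmt3_general k hk T htree hcard A hA hAind hAcind n hdvd
end

section
/- Let k ≥ k' ≥ 0 be integers with k ≥ 1, and let G be a graph on n vertices with maximum degree Δ(G) ≤ k−1 and at least k'·n/2 + 3k³ edges, where n ≥ 3k³. Assume that the Erdős–Sós conjecture holds for every tree on at most k'+2 vertices. Then for every integer N with 1 ≤ N ≤ 2k and every choice of trees T₁, …, T_N each having at most k'+2 vertices, G contains pairwise vertex-disjoint copies of T₁, …, T_N (i.e., G contains the disjoint union T₁ ∪ ⋯ ∪ T_N as a subgraph). -/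
/-!
Embed the trees one at a time. When a tree on `m ≤ k' + 2` vertices is to be placed, the
previously placed trees occupy a set `S` of fewer than `2k(k+2)` vertices. Deleting all edges at
`S` costs at most `|S|(k-1)`, fewer than `3k³`, edges, so more than `k'n/2 ≥ (m-2)n/2` edges
survive and the Erdős–Sós property yields a copy of the tree. Since a tree with at least two
vertices has no isolated vertex, that copy avoids `S`; a one-vertex tree goes to an endpoint of
a surviving edge.
-/

open Finset Function

namespace SimpleGraph

variable {V : Type*} (G : SimpleGraph V)

def deleteIncidenceSets (s : Set V) : SimpleGraph V :=
  G.deleteEdges (⋃ v ∈ s, G.incidenceSet v)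

variable {G}

theorem deleteIncidenceSets_adj {s : Set V} {v w : V} :
    (G.deleteIncidenceSets s).Adj v w ↔ G.Adj v w ∧ v ∉ s ∧ w ∉ s := by
  simp only [deleteIncidenceSets, deleteEdges_adj, Set.mem_iUnion, mk'_mem_incidenceSet_iff]
  grind

theorem ncard_edgeSet_le_deleteIncidenceSets [Finite V] (s : Finset V) :
    G.edgeSet.ncard ≤
      (G.deleteIncidenceSets s).edgeSet.ncard + ∑ v ∈ s, (G.neighborSet v).ncard := by
  classical
  rw [deleteIncidenceSets, edgeSet_deleteEdges]
  refine (Set.ncard_le_ncard_sdiff_add_ncard _ _ (Set.toFinite _)).trans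
    (Nat.add_le_add_left ?_ _)
  refine (s.set_ncard_biUnion_le _).trans (sum_le_sum fun v _ => ?_)
  exact (Nat.card_congr (G.incidenceSetEquivNeighborSet v)).le

end SimpleGraph

open SimpleGraph

theorem ErdosSosProperty.exists_injective_avoiding {m n d : ℕ} {T : SimpleGraph (Fin m)}
    (hES : ErdosSosProperty T) (hT : T.Preconnected) {G : SimpleGraph (Fin n)}
    (hmax : ∀ v, (G.neighborSet v).ncard ≤ d) (S : Finset (Fin n))
    (hedges : (m - 2) * n + 2 * (#S * d) < 2 * G.edgeSet.ncard) :
    ∃ f : Fin m → Fin n, Injective f ∧ (∀ a, f a ∉ S) ∧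
      ∀ a b, T.Adj a b → G.Adj (f a) (f b) := by
  have hH : (m - 2) * n < 2 * (G.deleteIncidenceSets S).edgeSet.ncard := by
    have := G.ncard_edgeSet_le_deleteIncidenceSets S
    have := sum_le_card_nsmul S _ d fun v _ => hmax v
    rw [smul_eq_mul] at this
    omega
  rcases subsingleton_or_nontrivial (Fin m) with hm | hm
  · obtain ⟨v, w, hvw⟩ : ∃ v w, (G.deleteIncidenceSets S).Adj v w :=
      ne_bot_iff_exists_adj.mp fun h => by simp [h] at hH
    exact ⟨fun _ => v, fun a b _ => Subsingleton.elim a b,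
      fun _ => (deleteIncidenceSets_adj.mp hvw).2.1,
      fun a b hab => absurd hab (Subsingleton.elim a b ▸ T.irrefl)⟩
  · obtain ⟨f, hf⟩ := hES n _ hH
    refine ⟨f, hf, fun a => ?_, fun a b hab => (deleteIncidenceSets_adj.mp (f.map_adj hab)).1⟩
    obtain ⟨b, hab⟩ : a ∈ T.support := hT.support_eq_univ ▸ Set.mem_univ a
    exact (deleteIncidenceSets_adj.mp (f.map_adj hab)).2.1

theorem injective_sigma_uncurry {ι α : Type*} {β : ι → Type*} {F : ∀ i, β i → α}
    (hinj : ∀ i, Injective (F i)) (hdisj : ∀ i j x y, F i x = F j y → i = j) :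
    Injective fun p : Σ i, β i => F p.1 p.2 := by
  rintro ⟨i, x⟩ ⟨j, y⟩ h
  obtain rfl := hdisj i j x y h
  exact congrArg (Sigma.mk i) (hinj i h)

section Packing

variable {α : Type*} [DecidableEq α]

theorem exists_disjoint_injective_avoiding {N : ℕ} {β : Fin N → Type*} [∀ i, Fintype (β i)]
    (P : ∀ i, (β i → α) → Prop) (b : ℕ)
    (h : ∀ i (S : Finset α), #S + Fintype.card (β i) ≤ b →
      ∃ g : β i → α, Injective g ∧ (∀ x, g x ∉ S) ∧ P i g)
    (S : Finset α) (hS : #S + ∑ i, Fintype.card (β i) ≤ b) :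
    ∃ F : ∀ i, β i → α, (∀ i, Injective (F i) ∧ (∀ x, F i x ∉ S) ∧ P i (F i)) ∧
      ∀ i j x y, F i x = F j y → i = j := by
  induction N generalizing S with
  | zero => exact ⟨fun i => i.elim0, fun i => i.elim0, fun i => i.elim0⟩
  | succ N ih =>
    rw [Fin.sum_univ_succ] at hS
    obtain ⟨g, hg, hgS, hgP⟩ := h 0 S (by omega)
    have hcard : #(S ∪ univ.image g) + ∑ i : Fin N, Fintype.card (β i.succ) ≤ b := by
      have := card_union_le S (univ.image g)
      have := card_image_le (s := univ) (f := g)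
      rw [card_univ] at this
      omega
    obtain ⟨F, hF, hFdisj⟩ := ih (fun i => P i.succ) (fun i => h i.succ) _ hcard
    have hFg : ∀ i x y, F i x ≠ g y := fun i x y hxy =>
      (hF i).2.1 x (mem_union_right _ (mem_image.mpr ⟨y, mem_univ _, hxy.symm⟩))
    refine ⟨Fin.cons g F, Fin.forall_fin_succ.mpr ⟨⟨hg, hgS, hgP⟩, fun i => ?_⟩, ?_⟩
    · rw [Fin.cons_succ]
      exact ⟨(hF i).1, fun x hx => (hF i).2.1 x (mem_union_left _ hx), (hF i).2.2⟩
    · intro i j x y hxy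
      induction i using Fin.cases <;> induction j using Fin.cases <;>
        simp only [Fin.cons_zero, Fin.cons_succ] at hxy
      · rfl
      · exact absurd hxy.symm (hFg _ _ _)
      · exact absurd hxy (hFg _ _ _)
      · rw [hFdisj _ _ _ _ hxy]

theorem exists_injective_sigma_of_forall_avoiding {N : ℕ} {β : Fin N → Type*}
    [∀ i, Fintype (β i)] (P : ∀ i, (β i → α) → Prop) (b : ℕ)
    (h : ∀ i (S : Finset α), #S + Fintype.card (β i) ≤ b →
      ∃ g : β i → α, Injective g ∧ (∀ x, g x ∉ S) ∧ P i g)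
    (hb : ∑ i, Fintype.card (β i) ≤ b) :
    ∃ f : (Σ i, β i) → α, Injective f ∧ ∀ i, P i fun x => f ⟨i, x⟩ := by
  obtain ⟨F, hF, hdisj⟩ := exists_disjoint_injective_avoiding P b h ∅ (by simpa using hb)
  exact ⟨_, injective_sigma_uncurry (fun i => (hF i).1) hdisj, fun i => (hF i).2.2⟩

end Packing

theorem stmt8_general (k k' : ℕ) (hk' : k' ≤ k)
    (n : ℕ)
    (G : SimpleGraph (Fin n))
    (hmax : ∀ v : Fin n, (G.neighborSet v).ncard ≤ k - 1)
    (hedges : k' * n + 6 * k ^ 3 ≤ 2 * G.edgeSet.ncard)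
    (hES : ∀ (m : ℕ), m ≤ k' + 2 → ∀ (T' : SimpleGraph (Fin m)), T'.IsTree →
      ErdosSosProperty T')
    (N : ℕ) (hN2 : N ≤ 2 * k)
    (m : Fin N → ℕ) (T : ∀ i, SimpleGraph (Fin (m i)))
    (htrees : ∀ i, (T i).IsTree) (hm : ∀ i, m i ≤ k' + 2) :
    ∃ f : (Σ i : Fin N, Fin (m i)) → Fin n, Function.Injective f ∧
      ∀ (i : Fin N) (a b : Fin (m i)),
        (T i).Adj a b → G.Adj (f ⟨i, a⟩) (f ⟨i, b⟩) := by
  have hloss : ∀ s, s < 2 * k * (k + 2) → 2 * (s * (k - 1)) < 6 * k ^ 3 := by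
    intro s hs
    obtain _ | k := k
    · simp at hs
    · have : (s + 1) * k ≤ 2 * (k + 1) * (k + 1 + 2) * k := Nat.mul_le_mul_right k hs
      rw [Nat.add_sub_cancel]
      nlinarith [Nat.zero_le (k ^ 3), Nat.zero_le (k ^ 2)]
  refine exists_injective_sigma_of_forall_avoiding (β := fun i => Fin (m i))
    (fun i g => ∀ a b, (T i).Adj a b → G.Adj (g a) (g b)) (2 * k * (k + 2)) (fun i S hS => ?_) ?_
  · have hmi : 0 < m i := Fin.pos_iff_nonempty.mpr (htrees i).connected.nonempty
    rw [Fintype.card_fin] at hS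
    refine (hES _ (hm i) _ (htrees i)).exists_injective_avoiding
      (htrees i).connected.preconnected hmax S ?_
    have := Nat.mul_le_mul_right n (Nat.sub_le_of_le_add (hm i))
    have := hloss #S (by omega)
    omega
  · calc ∑ i, Fintype.card (Fin (m i)) = ∑ i, m i := by simp only [Fintype.card_fin]
      _ ≤ ∑ _i : Fin N, (k + 2) := sum_le_sum fun i _ => by have := hm i; omega
      _ = N * (k + 2) := by rw [sum_const, card_univ, Fintype.card_fin, smul_eq_mul]
      _ ≤ 2 * k * (k + 2) := Nat.mul_le_mul_right _ hN2

theorem stmt8 (k k' : ℕ) (hk : 1 ≤ k) (hk' : k' ≤ k)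
    (n : ℕ) (hn : 3 * k ^ 3 ≤ n)
    (G : SimpleGraph (Fin n))
    (hmax : ∀ v : Fin n, (G.neighborSet v).ncard ≤ k - 1)
    (hedges : k' * n + 6 * k ^ 3 ≤ 2 * G.edgeSet.ncard)
    (hES : ∀ (m : ℕ), m ≤ k' + 2 → ∀ (T' : SimpleGraph (Fin m)), T'.IsTree →
      ErdosSosProperty T')
    (N : ℕ) (hN1 : 1 ≤ N) (hN2 : N ≤ 2 * k)
    (m : Fin N → ℕ) (T : ∀ i, SimpleGraph (Fin (m i)))
    (htrees : ∀ i, (T i).IsTree) (hm : ∀ i, m i ≤ k' + 2) :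
    ∃ f : (Σ i : Fin N, Fin (m i)) → Fin n, Function.Injective f ∧
      ∀ (i : Fin N) (a b : Fin (m i)),
        (T i).Adj a b → G.Adj (f ⟨i, a⟩) (f ⟨i, b⟩) :=
  stmt8_general k k' hk' n G hmax hedges hES N hN2 m T htrees hm
end

section
/- Let k ≥ 1 be an integer and let T be a balanced tree on 2k or 2k+1 vertices. For every integer a with 1 ≤ a ≤ k there exists an independent set I ⊆ V(T) with |I| ≤ a such that every connected component of T − I has at most k − a + 1 vertices. -/
/-!
Put `m = k - a + 1`, so that `n + 1 ≤ 2a + 2m` for the number `n` of vertices. An `m`-cut is an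
independent set whose removal leaves components of at most `m` vertices.

For a subtree `R` rooted at `p`, induction over the branches at `p` gives two `m`-cuts of `R`,
one containing `p` and one avoiding it, of total size at most `|R| - m + 1`: in the cut avoiding
`p` a maximal family of branches of total size `< m` stays attached to `p`, and the remaining
branches are cut recursively, each with the opposite choice at its root.

If some edge `up` has more than `m` vertices on both sides, combine the cut of `u`'s side
containing `u` with the cut of `p`'s side avoiding `p`, and vice versa: the two `m`-cuts of `T`
have total size at most `n - 2m + 2 ≤ 2a + 1`, so one has at most `a` vertices. Otherwise take a
side of more than `m` vertices that is as small as possible: its end `u` has all its branches of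
at most `m` vertices, and `{u}` is an `m`-cut.
-/

open Finset

theorem Finset.exists_subset_sum_lt_le_add {ι : Type*} [DecidableEq ι] (s : Finset ι)
    (f : ι → ℕ) {t : ℕ} (ht : 0 < t) (hts : t ≤ ∑ i ∈ s, f i) :
    ∃ K ⊆ s, ∃ i ∈ s, i ∉ K ∧ ∑ j ∈ K, f j < t ∧ t ≤ ∑ j ∈ K, f j + f i := by
  induction s using Finset.induction_on with
  | empty => simp at hts; omega
  | insert a s ha ih =>
    rw [sum_insert ha] at hts
    by_cases h : t ≤ ∑ i ∈ s, f i
    · obtain ⟨K, hK, i, hi, hiK, h₁, h₂⟩ := ih h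
      exact ⟨K, hK.trans (subset_insert _ _), i, mem_insert_of_mem hi, hiK, h₁, h₂⟩
    · exact ⟨s, subset_insert _ _, a, mem_insert_self _ _, ha, by omega, by omega⟩

theorem Finset.sum_sdiff_tsub_add_one_add_le {ι : Type*} [DecidableEq ι] {N K : Finset ι}
    {g : ι → ℕ} {m : ℕ} {i₀ : ι} (hm : 1 ≤ m) (hK : K ⊆ N) (hg : ∀ i ∈ N, 1 ≤ g i)
    (hi₀ : i₀ ∈ N \ K) (hc : m ≤ ∑ i ∈ K, g i + g i₀) :
    ∑ i ∈ N \ K, (g i - m + 1) + m ≤ ∑ i ∈ N, g i + 1 := by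
  have e₁ := add_sum_erase (N \ K) (fun i => g i - m + 1) hi₀
  have e₂ := add_sum_erase (N \ K) g hi₀
  have e₃ := sum_sdiff hK (f := g)
  have : ∑ i ∈ (N \ K).erase i₀, (g i - m + 1) ≤ ∑ i ∈ (N \ K).erase i₀, g i :=
    sum_le_sum fun i hi => by have := hg i (mem_sdiff.1 (mem_of_mem_erase hi)).1; omega
  omega

namespace SimpleGraph

variable {V : Type*} {G : SimpleGraph V}

variable (G) in
/-- `G.ReachIn S x x` holds even when `x ∉ S`. -/
def ReachIn (S : Finset V) : V → V → Prop :=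
  Relation.ReflTransGen fun a b => a ∈ S ∧ b ∈ S ∧ G.Adj a b

open Classical in
variable (G) in
/-- The vertex set of the component of `v` in `G[S]`; empty when `v ∉ S`. -/
noncomputable def compIn (S : Finset V) (v : V) : Finset V :=
  S.filter (G.ReachIn S v)

variable {S S' : Finset V} {p q u v w x y : V}

theorem ReachIn.mono (h : S ⊆ S') (hxy : G.ReachIn S x y) : G.ReachIn S' x y :=
  Relation.ReflTransGen.mono (fun _ _ hab => ⟨h hab.1, h hab.2.1, hab.2.2⟩) _ _ hxy

theorem ReachIn.symm (h : G.ReachIn S x y) : G.ReachIn S y x :=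
  Relation.ReflTransGen.mono (fun _ _ hab => ⟨hab.2.1, hab.1, hab.2.2.symm⟩) _ _
    (Relation.reflTransGen_swap.2 h)

theorem Reachable.reachIn_univ [Fintype V] (h : G.Reachable x y) : G.ReachIn univ x y :=
  Relation.ReflTransGen.mono (fun _ _ hab => ⟨mem_univ _, mem_univ _, hab⟩) _ _
    ((reachable_iff_reflTransGen x y).1 h)

theorem ReachIn.exists_adj_of_ne [DecidableEq V] (h : G.ReachIn S w p) (hwp : w ≠ p) :
    ∃ q ∈ S, G.Adj q p ∧ G.ReachIn (S.erase p) w q := by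
  induction h using Relation.ReflTransGen.head_induction_on with
  | refl => exact absurd rfl hwp
  | @head a b hab _ ih =>
    by_cases hbp : b = p
    · exact ⟨a, hab.1, hbp ▸ hab.2.2, .refl⟩
    · obtain ⟨q, hqS, hqp, hbq⟩ := ih hbp
      exact ⟨q, hqS, hqp,
        .head ⟨mem_erase.2 ⟨hwp, hab.1⟩, mem_erase.2 ⟨hbp, hab.2.1⟩, hab.2.2⟩ hbq⟩

theorem mem_compIn : x ∈ G.compIn S v ↔ x ∈ S ∧ G.ReachIn S v x := by
  classical
  simp [compIn]

theorem compIn_subset : G.compIn S v ⊆ S := fun _ hx => (mem_compIn.1 hx).1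

theorem mem_compIn_self (hv : v ∈ S) : v ∈ G.compIn S v := mem_compIn.2 ⟨hv, .refl⟩

theorem mem_compIn_of_adj (hx : x ∈ G.compIn S v) (hy : y ∈ S) (hxy : G.Adj x y) :
    y ∈ G.compIn S v :=
  mem_compIn.2 ⟨hy, (mem_compIn.1 hx).2.tail ⟨(mem_compIn.1 hx).1, hy, hxy⟩⟩

theorem reachIn_compIn (hx : x ∈ G.compIn S v) : G.ReachIn (G.compIn S v) v x := by
  obtain ⟨hxS, hvx⟩ := mem_compIn.1 hx
  induction hvx with
  | refl => exact .refl
  | @tail b c hvb hbc ih =>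
    have hb : b ∈ G.compIn S v := mem_compIn.2 ⟨hbc.1, hvb⟩
    exact (ih hb hbc.1).tail ⟨hb, hx, hbc.2.2⟩

theorem compIn_eq_of_mem (hx : x ∈ G.compIn S v) : G.compIn S x = G.compIn S v := by
  obtain ⟨-, hvx⟩ := mem_compIn.1 hx
  ext y
  simp only [mem_compIn]
  exact and_congr_right fun _ => ⟨hvx.trans, hvx.symm.trans⟩

theorem disjoint_compIn (hv : v ∈ S) (h : v ∉ G.compIn S w) :
    Disjoint (G.compIn S v) (G.compIn S w) := by
  refine Finset.disjoint_left.2 fun x hxv hxw => h ?_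
  rw [← compIn_eq_of_mem hxw, compIn_eq_of_mem hxv]
  exact mem_compIn_self hv

theorem not_adj_of_disjoint_compIn (hdisj : Disjoint (G.compIn S v) (G.compIn S w))
    (hx : x ∈ G.compIn S v) (hy : y ∈ G.compIn S w) : ¬ G.Adj x y := fun hxy =>
  Finset.disjoint_left.1 hdisj (mem_compIn_of_adj hx (compIn_subset hy) hxy) hy

theorem compIn_eq_insert_biUnion [DecidableEq V] [DecidableRel G.Adj] (hp : p ∈ S) :
    G.compIn S p = insert p (((G.compIn S p).filter (G.Adj p)).biUnion
      (G.compIn ((G.compIn S p).erase p))) := by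
  ext w
  refine ⟨fun hw => ?_, fun hw => ?_⟩
  · by_cases hwp : w = p
    · exact hwp ▸ mem_insert_self _ _
    obtain ⟨q, hqR, hqp, hwq⟩ := (reachIn_compIn hw).symm.exists_adj_of_ne hwp
    exact mem_insert_of_mem (mem_biUnion.2 ⟨q, mem_filter.2 ⟨hqR, hqp.symm⟩,
      mem_compIn.2 ⟨mem_erase.2 ⟨hwp, hw⟩, hwq.symm⟩⟩)
  · rcases mem_insert.1 hw with rfl | hw
    · exact mem_compIn_self hp
    · obtain ⟨q, -, hwq⟩ := mem_biUnion.1 hw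
      exact mem_of_mem_erase (compIn_subset hwq)

/-- The edge `px` is a bridge, yet `x` reaches `p` through `S` and `y` without using it. -/
theorem IsAcyclic.eq_of_adj_of_reachIn (hG : G.IsAcyclic) (hp : p ∉ S) (hpx : G.Adj p x)
    (hpy : G.Adj p y) (h : G.ReachIn S x y) : x = y := by
  by_contra hxy
  refine isBridge_iff.1 (isAcyclic_iff_forall_adj_isBridge.1 hG hpx) (.symm ?_)
  have hxy' : (G.deleteEdges {s(p, x)}).Reachable x y := by
    refine (reachable_iff_reflTransGen x y).2
      (Relation.ReflTransGen.mono (fun a b hab => ?_) _ _ h)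
    refine deleteEdges_adj.2 ⟨hab.2.2, fun he => hp ?_⟩
    rcases Sym2.eq_iff.1 (Set.mem_singleton_iff.1 he) with ⟨rfl, -⟩ | ⟨-, rfl⟩
    exacts [hab.1, hab.2.1]
  refine hxy'.trans (Adj.reachable (deleteEdges_adj.2 ⟨hpy.symm, fun he => hxy ?_⟩))
  rcases Sym2.eq_iff.1 (Set.mem_singleton_iff.1 he) with ⟨rfl, -⟩ | ⟨rfl, -⟩
  exacts [absurd hpy G.irrefl, rfl]

theorem IsAcyclic.eq_of_mem_compIn_of_adj (hG : G.IsAcyclic) (hp : p ∉ S) (hpq : G.Adj p q)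
    (hx : x ∈ G.compIn S q) (hpx : G.Adj p x) : x = q :=
  hG.eq_of_adj_of_reachIn hp hpx hpq (mem_compIn.1 hx).2.symm

variable (G) in
/-- The component of `v` in `G[A]` has at most `m` vertices, witnessed by a set of at most `m`
vertices of `A` that contains `v` and is closed under adjacency inside `A`. -/
def SmallComponent (m : ℕ) (A : Finset V) (v : V) : Prop :=
  ∃ C ⊆ A, v ∈ C ∧ C.card ≤ m ∧ ∀ x ∈ C, ∀ y ∈ A, G.Adj x y → y ∈ C

variable (G) in
/-- The sets `B q`, `q ∈ N`, behave like the branches at the root `p` of a tree, `B q` being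
attached to `p` at most through `q`. -/
structure IsBranching (p : V) (N : Finset V) (B : V → Finset V) : Prop where
  pairwiseDisjoint : (N : Set V).PairwiseDisjoint B
  not_adj : ∀ q ∈ N, ∀ q' ∈ N, q ≠ q' → ∀ x ∈ B q, ∀ y ∈ B q', ¬ G.Adj x y
  eq_of_adj : ∀ q ∈ N, ∀ x ∈ B q, G.Adj p x → x = q
  root_notMem : ∀ q ∈ N, p ∉ B q
  mem_self : ∀ q ∈ N, q ∈ B q

variable {N K F : Finset V} {B : V → Finset V}

theorem IsBranching.mono (hb : G.IsBranching p N B) (hK : K ⊆ N) : G.IsBranching p K B :=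
  ⟨hb.pairwiseDisjoint.subset (coe_subset.2 hK),
    fun q hq q' hq' => hb.not_adj q (hK hq) q' (hK hq'), fun q hq => hb.eq_of_adj q (hK hq),
    fun q hq => hb.root_notMem q (hK hq), fun q hq => hb.mem_self q (hK hq)⟩

section DecidableEq

variable [DecidableEq V] {m : ℕ} {A A' R R₁ R₂ I₁ I₂ : Finset V}

variable (G) in
structure IsIndepCut (m : ℕ) (R I : Finset V) : Prop where
  subset : I ⊆ R
  indep : ∀ x ∈ I, ∀ y ∈ I, ¬ G.Adj x y
  small : ∀ v ∈ R \ I, G.SmallComponent m (R \ I) v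

theorem SmallComponent.of_subset (h : G.SmallComponent m A v) (hAA' : A ⊆ A')
    (hsep : ∀ x ∈ A, ∀ y ∈ A' \ A, ¬ G.Adj x y) : G.SmallComponent m A' v := by
  obtain ⟨C, hCA, hvC, hCm, hC⟩ := h
  refine ⟨C, hCA.trans hAA', hvC, hCm, fun x hx y hy hxy => ?_⟩
  by_cases hyA : y ∈ A
  · exact hC x hx y hyA hxy
  · exact absurd hxy (hsep x (hCA hx) y (mem_sdiff.2 ⟨hy, hyA⟩))

theorem isIndepCut_empty (h : R.card ≤ m) : G.IsIndepCut m R ∅ :=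
  ⟨empty_subset _, by simp, fun v hv =>
    ⟨R \ ∅, subset_rfl, hv, by simpa using h, fun _ _ _ hy _ => hy⟩⟩

theorem isIndepCut_singleton (hp : p ∈ R)
    (h : ∀ v ∈ R.erase p, (G.compIn (R.erase p) v).card ≤ m) : G.IsIndepCut m R {p} := by
  refine ⟨singleton_subset_iff.2 hp, by simp, fun v hv => ?_⟩
  rw [sdiff_singleton_eq_erase] at hv ⊢
  exact ⟨_, compIn_subset, mem_compIn_self hv, h v hv,
    fun x hx y hy hxy => mem_compIn_of_adj hx hy hxy⟩

theorem IsIndepCut.union (h₁ : G.IsIndepCut m R₁ I₁) (h₂ : G.IsIndepCut m R₂ I₂)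
    (hR : Disjoint R₁ R₂) (hindep : ∀ x ∈ I₁, ∀ y ∈ I₂, ¬ G.Adj x y)
    (hsep : ∀ x ∈ R₁ \ I₁, ∀ y ∈ R₂ \ I₂, ¬ G.Adj x y) :
    G.IsIndepCut m (R₁ ∪ R₂) (I₁ ∪ I₂) := by
  have hdiff : (R₁ ∪ R₂) \ (I₁ ∪ I₂) = R₁ \ I₁ ∪ R₂ \ I₂ := by
    ext x
    have h1 : x ∈ I₁ → x ∈ R₁ := fun h => h₁.subset h
    have h2 : x ∈ I₂ → x ∈ R₂ := fun h => h₂.subset h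
    have h3 : x ∈ R₁ → x ∉ R₂ := fun h => Finset.disjoint_left.1 hR h
    simp only [mem_sdiff, mem_union]
    tauto
  refine ⟨union_subset_union h₁.subset h₂.subset, ?_, ?_⟩
  · intro x hx y hy
    rcases mem_union.1 hx with hx | hx <;> rcases mem_union.1 hy with hy | hy
    exacts [h₁.indep x hx y hy, hindep x hx y hy, fun h => hindep y hy x hx h.symm,
      h₂.indep x hx y hy]
  · rw [hdiff]
    have hmem : ∀ {y : V} {C D : Finset V}, y ∈ (C ∪ D) \ C → y ∈ D := fun hy =>
      (mem_union.1 (mem_sdiff.1 hy).1).resolve_left (mem_sdiff.1 hy).2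
    intro v hv
    rcases mem_union.1 hv with hv | hv
    · exact (h₁.small v hv).of_subset subset_union_left fun x hx y hy => hsep x hx y (hmem hy)
    · refine (h₂.small v hv).of_subset subset_union_right fun x hx y hy hxy => ?_
      exact hsep y (hmem (union_comm (R₁ \ I₁) _ ▸ hy)) x hx hxy.symm

theorem IsIndepCut.biUnion {ι : Type*} {F : Finset ι} {B J : ι → Finset V}
    (h : ∀ i ∈ F, G.IsIndepCut m (B i) (J i)) (hdisj : (F : Set ι).PairwiseDisjoint B)
    (hsep : ∀ i ∈ F, ∀ j ∈ F, i ≠ j → ∀ x ∈ B i, ∀ y ∈ B j, ¬ G.Adj x y) :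
    G.IsIndepCut m (F.biUnion B) (F.biUnion J) := by
  have hJ : ∀ i ∈ F, ∀ j ∈ F, ∀ x ∈ B i, x ∈ J j → j = i := fun i hi j hj x hx hxj => by
    by_contra hne
    exact Finset.disjoint_left.1 (hdisj hj hi hne) ((h j hj).subset hxj) hx
  refine ⟨biUnion_mono fun i hi => (h i hi).subset, ?_, ?_⟩
  · intro x hx y hy
    obtain ⟨i, hi, hxi⟩ := mem_biUnion.1 hx
    obtain ⟨j, hj, hyj⟩ := mem_biUnion.1 hy
    obtain rfl | hij := eq_or_ne i j
    · exact (h i hi).indep x hxi y hyj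
    · exact hsep i hi j hj hij x ((h i hi).subset hxi) y ((h j hj).subset hyj)
  · intro v hv
    obtain ⟨hvB, hvJ⟩ := mem_sdiff.1 hv
    obtain ⟨i, hi, hvi⟩ := mem_biUnion.1 hvB
    have hvJi : v ∉ J i := fun h => hvJ (mem_biUnion.2 ⟨i, hi, h⟩)
    refine ((h i hi).small v (mem_sdiff.2 ⟨hvi, hvJi⟩)).of_subset (fun x hx => ?_) ?_
    · obtain ⟨hxi, hxJ⟩ := mem_sdiff.1 hx
      refine mem_sdiff.2 ⟨mem_biUnion.2 ⟨i, hi, hxi⟩, fun h => ?_⟩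
      obtain ⟨j, hj, hxj⟩ := mem_biUnion.1 h
      exact hxJ (hJ i hi j hj x hxi hxj ▸ hxj)
    · intro x hx y hy
      obtain ⟨⟨hyB, hyJ⟩, hyi⟩ := mem_sdiff.1 hy |>.imp_left mem_sdiff.1
      obtain ⟨j, hj, hyj⟩ := mem_biUnion.1 hyB
      obtain rfl | hij := eq_or_ne i j
      · exact absurd (mem_sdiff.2 ⟨hyj, fun h => hyJ (mem_biUnion.2 ⟨i, hi, h⟩)⟩) hyi
      · exact hsep i hi j hj hij x (mem_sdiff.1 hx).1 y hyj

theorem IsAcyclic.isBranching_compIn [DecidableRel G.Adj] (hG : G.IsAcyclic) (R : Finset V)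
    (p : V) : G.IsBranching p (R.filter (G.Adj p)) (G.compIn (R.erase p)) := by
  have hp : p ∉ R.erase p := notMem_erase p R
  have hN : ∀ q ∈ R.filter (G.Adj p), q ∈ R.erase p ∧ G.Adj p q := fun q hq =>
    ⟨mem_erase.2 ⟨(mem_filter.1 hq).2.ne', (mem_filter.1 hq).1⟩, (mem_filter.1 hq).2⟩
  have hdisj : ((R.filter (G.Adj p) : Finset V) : Set V).PairwiseDisjoint
      (G.compIn (R.erase p)) := fun q hq q' hq' hne =>
    disjoint_compIn (hN q hq).1 fun h =>
      hne (hG.eq_of_mem_compIn_of_adj hp (hN q' hq').2 h (hN q hq).2)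
  exact ⟨hdisj,
    fun q hq q' hq' hne _ hx _ hy => not_adj_of_disjoint_compIn (hdisj hq hq' hne) hx hy,
    fun q hq _ hx hpx => hG.eq_of_mem_compIn_of_adj hp (hN q hq).2 hx hpx,
    fun _ _ h => hp (compIn_subset h), fun q hq => mem_compIn_self (hN q hq).1⟩

theorem IsBranching.card_insert_biUnion (hb : G.IsBranching p N B) :
    (insert p (N.biUnion B)).card = ∑ q ∈ N, (B q).card + 1 := by
  rw [card_insert_of_notMem fun h => ?_, card_biUnion hb.pairwiseDisjoint]
  obtain ⟨q, hq, hpq⟩ := mem_biUnion.1 h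
  exact hb.root_notMem q hq hpq

theorem IsBranching.disjoint_insert_biUnion (hb : G.IsBranching p N B) (hK : K ⊆ N)
    (hF : F ⊆ N) (hKF : Disjoint K F) : Disjoint (insert p (K.biUnion B)) (F.biUnion B) := by
  refine Finset.disjoint_left.2 fun x hxK hxF => ?_
  obtain ⟨q, hq, hxq⟩ := mem_biUnion.1 hxF
  rcases mem_insert.1 hxK with rfl | hx
  · exact hb.root_notMem q (hF hq) hxq
  · obtain ⟨q', hq', hxq'⟩ := mem_biUnion.1 hx
    exact Finset.disjoint_left.1 (hb.pairwiseDisjoint (hK hq') (hF hq)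
      (fun h => Finset.disjoint_left.1 hKF hq' (h ▸ hq))) hxq' hxq

theorem IsBranching.eq_root_of_adj (hb : G.IsBranching p N B) (hK : K ⊆ N) (hF : F ⊆ N)
    (hKF : Disjoint K F) (hx : x ∈ insert p (K.biUnion B)) (hq : q ∈ F) (hy : y ∈ B q)
    (hxy : G.Adj x y) : x = p := by
  rcases mem_insert.1 hx with rfl | hx
  · rfl
  · obtain ⟨q', hq', hxq'⟩ := mem_biUnion.1 hx
    exact absurd hxy (hb.not_adj q' (hK hq') q (hF hq)
      (fun h => Finset.disjoint_left.1 hKF hq' (h ▸ hq)) x hxq' y hy)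

theorem IsIndepCut.union_biUnion_of_root {P I₀ : Finset V} {J : V → Finset V}
    (hb : G.IsBranching p F B) (h₀ : G.IsIndepCut m P I₀)
    (h : ∀ q ∈ F, G.IsIndepCut m (B q) (J q)) (hPF : Disjoint P (F.biUnion B))
    (hroot : ∀ x ∈ P, ∀ q ∈ F, ∀ y ∈ B q, G.Adj x y → x = p)
    (hJ : ∀ q ∈ F, q ∈ J q ↔ p ∉ I₀) :
    G.IsIndepCut m (P ∪ F.biUnion B) (I₀ ∪ F.biUnion J) := by
  refine h₀.union (IsIndepCut.biUnion h hb.pairwiseDisjoint hb.not_adj) hPF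
    (fun x hx y hy hxy => ?_) (fun x hx y hy hxy => ?_)
  · obtain ⟨q, hq, hyq⟩ := mem_biUnion.1 hy
    obtain rfl := hroot x (h₀.subset hx) q hq y ((h q hq).subset hyq) hxy
    obtain rfl := hb.eq_of_adj q hq y ((h q hq).subset hyq) hxy
    exact (hJ y hq).1 hyq hx
  · obtain ⟨hyB, hyJ⟩ := mem_sdiff.1 hy
    obtain ⟨q, hq, hyq⟩ := mem_biUnion.1 hyB
    obtain rfl := hroot x (mem_sdiff.1 hx).1 q hq y hyq hxy
    obtain rfl := hb.eq_of_adj q hq y hyq hxy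
    exact hyJ (mem_biUnion.2 ⟨y, hq, (hJ y hq).2 (mem_sdiff.1 hx).2⟩)

variable (G) in
/-- By truncated subtraction, the size bound is `1` whenever `R.card ≤ m`. -/
structure IsCutPair (m : ℕ) (R : Finset V) (p : V) (U W : Finset V) : Prop where
  cut_left : G.IsIndepCut m R U
  cut_right : G.IsIndepCut m R W
  mem_left : p ∈ U
  notMem_right : p ∉ W
  card_add_le : U.card + W.card ≤ R.card - m + 1

theorem IsBranching.exists_isCutPair (hb : G.IsBranching p N B) (hm : 1 ≤ m)
    (hbig : m < (insert p (N.biUnion B)).card)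
    (ih : ∀ q ∈ N, ∃ U W, G.IsCutPair m (B q) q U W) :
    ∃ U W, G.IsCutPair m (insert p (N.biUnion B)) p U W := by
  rw [hb.card_insert_biUnion] at hbig
  -- The branches in `K` stay attached to `p` in the cut avoiding `p`; `q₀` makes `K` maximal.
  obtain ⟨K, hKN, q₀, hq₀N, hq₀K, hKm, hmq₀⟩ :=
    exists_subset_sum_lt_le_add N (fun q => (B q).card) (t := m) (by omega) (by omega)
  set F := N \ K
  have hFN : F ⊆ N := sdiff_subset
  have hKF : Disjoint K F := disjoint_sdiff
  choose! U' W' hUW' using fun q (hq : q ∈ F) => ih q (hFN hq)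
  set P := insert p (K.biUnion B)
  have hR : insert p (N.biUnion B) = P ∪ F.biUnion B := by
    rw [insert_union, ← union_biUnion, union_sdiff_of_subset hKN]
  have hPm : P.card ≤ m := by
    have : P.card = ∑ q ∈ K, (B q).card + 1 := (hb.mono hKN).card_insert_biUnion
    omega
  have hPF := hb.disjoint_insert_biUnion hKN hFN hKF
  have hroot : ∀ x ∈ P, ∀ q ∈ F, ∀ y ∈ B q, G.Adj x y → x = p :=
    fun _ hx _ hq _ hy hxy => hb.eq_root_of_adj hKN hFN hKF hx hq hy hxy
  have hU := (isIndepCut_singleton (mem_insert_self p _) fun v _ =>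
      (card_le_card compIn_subset).trans ((card_le_card (erase_subset p P)).trans hPm)
    ).union_biUnion_of_root (hb.mono hFN) (fun q hq => (hUW' q hq).cut_right) hPF hroot
    fun q hq => by simp [(hUW' q hq).notMem_right]
  have hW := (isIndepCut_empty hPm).union_biUnion_of_root (hb.mono hFN)
    (fun q hq => (hUW' q hq).cut_left) hPF hroot fun q hq => by simp [(hUW' q hq).mem_left]
  rw [← hR] at hU hW
  rw [empty_union] at hW
  refine ⟨_, _, ⟨hU, hW, mem_union_left _ (mem_singleton_self p), fun h => ?_, ?_⟩⟩
  · obtain ⟨q, hq, hpq⟩ := mem_biUnion.1 h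
    exact hb.root_notMem q (hFN hq) ((hUW' q hq).cut_left.subset hpq)
  · have h₁ : ({p} ∪ F.biUnion W').card ≤ 1 + ∑ q ∈ F, (W' q).card :=
      (card_union_le _ _).trans (by rw [card_singleton]; gcongr; exact card_biUnion_le)
    have h₂ : (F.biUnion U').card ≤ ∑ q ∈ F, (U' q).card := card_biUnion_le
    have h₃ : ∑ q ∈ F, ((U' q).card + (W' q).card) ≤ ∑ q ∈ F, ((B q).card - m + 1) :=
      sum_le_sum fun q hq => (hUW' q hq).card_add_le
    have h₄ : ∑ q ∈ F, ((B q).card - m + 1) + m ≤ ∑ q ∈ N, (B q).card + 1 :=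
      sum_sdiff_tsub_add_one_add_le (g := fun q => (B q).card) hm hKN
      (fun q hq => card_pos.2 ⟨q, hb.mem_self q hq⟩) (mem_sdiff.2 ⟨hq₀N, hq₀K⟩) hmq₀
    rw [hb.card_insert_biUnion]
    rw [sum_add_distrib] at h₃
    omega

theorem IsAcyclic.exists_isCutPair (hG : G.IsAcyclic) (hm : 1 ≤ m) (hp : p ∈ S) :
    ∃ U W, G.IsCutPair m (G.compIn S p) p U W := by
  classical
  induction hn : (G.compIn S p).card using Nat.strong_induction_on generalizing S p with
  | _ n ih =>
  set R := G.compIn S p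
  have hpR : p ∈ R := mem_compIn_self hp
  by_cases hsmall : R.card ≤ m
  · refine ⟨{p}, ∅, ⟨isIndepCut_singleton hpR fun v _ => ?_, isIndepCut_empty hsmall,
      mem_singleton_self p, notMem_empty p, by simp⟩⟩
    calc _ ≤ (R.erase p).card := card_le_card compIn_subset
      _ ≤ m := by rw [card_erase_of_mem hpR]; omega
  have hR : R = insert p ((R.filter (G.Adj p)).biUnion (G.compIn (R.erase p))) :=
    compIn_eq_insert_biUnion hp
  rw [hR] at hsmall ⊢
  refine (hG.isBranching_compIn R p).exists_isCutPair hm (not_le.1 hsmall) fun q hq =>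
    ih _ ?_ (mem_erase.2 ⟨(mem_filter.1 hq).2.ne', (mem_filter.1 hq).1⟩) rfl
  calc _ ≤ (R.erase p).card := card_le_card compIn_subset
    _ < n := hn ▸ card_erase_lt_of_mem hpR

section Side

variable [Fintype V]

variable (G) in
/-- For an edge `up` of a tree, the vertices on the side of `u`. -/
noncomputable abbrev side (u p : V) : Finset V := G.compIn (univ.erase p) u

theorem ReachIn.exists_adj_mem_side (h : G.ReachIn S v w) (hvw : v ≠ w) :
    ∃ q ∈ S, G.Adj q w ∧ v ∈ G.side q w := by
  obtain ⟨q, hqS, hqw, hvq⟩ := h.exists_adj_of_ne hvw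
  exact ⟨q, hqS, hqw, mem_compIn.2 ⟨mem_erase.2 ⟨hvw, mem_univ _⟩,
    (hvq.mono (erase_subset_erase _ (subset_univ _))).symm⟩⟩

theorem IsAcyclic.side_subset_erase_side (hG : G.IsAcyclic) {c : V} (huc : G.Adj u c)
    (hup : G.Adj u p) (hcp : c ≠ p) : G.side c u ⊆ (G.side u p).erase u := by
  have hp : p ∉ G.side c u := fun hp =>
    hcp (hG.eq_of_mem_compIn_of_adj (notMem_erase u univ) huc hp hup).symm
  have hsub : G.side c u ⊆ univ.erase p := fun y hy =>
    mem_erase.2 ⟨fun h => hp (h ▸ hy), mem_univ _⟩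
  intro x hx
  refine mem_erase.2 ⟨ne_of_mem_erase (compIn_subset hx), mem_compIn.2 ⟨hsub hx, ?_⟩⟩
  exact .head ⟨mem_erase.2 ⟨hup.ne, mem_univ _⟩,
    hsub (mem_compIn_self (mem_erase.2 ⟨huc.ne', mem_univ _⟩)), huc⟩
    ((reachIn_compIn hx).mono hsub)

theorem Connected.compIn_compl_side (hG : G.Connected) (hup : G.Adj u p) :
    G.compIn (univ \ G.side u p) p = univ \ G.side u p := by
  have hpA : p ∉ G.side u p := fun h => ne_of_mem_erase (compIn_subset h) rfl
  refine Subset.antisymm compIn_subset fun w hw => ?_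
  by_cases hwp : w = p
  · subst hwp
    exact mem_compIn_self (mem_sdiff.2 ⟨mem_univ _, hpA⟩)
  obtain ⟨q, -, hqp, hwq⟩ := (hG.preconnected w p).reachIn_univ.exists_adj_mem_side hwp
  have hqA : q ∉ G.side u p := fun hq =>
    (mem_sdiff.1 hw).2 (by show w ∈ G.compIn _ u; rw [← compIn_eq_of_mem hq]; exact hwq)
  have hsub : G.side q p ⊆ univ \ G.side u p := fun x hx =>
    mem_sdiff.2 ⟨mem_univ _, Finset.disjoint_left.1
      (disjoint_compIn (mem_erase.2 ⟨hqp.ne, mem_univ _⟩) hqA) hx⟩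
  exact mem_compIn.2 ⟨hw, .head ⟨mem_sdiff.2 ⟨mem_univ _, hpA⟩,
    hsub (mem_compIn_self (mem_erase.2 ⟨hqp.ne, mem_univ _⟩)), hqp.symm⟩
    ((reachIn_compIn hwq).mono hsub)⟩

theorem IsAcyclic.eq_of_adj_of_mem_side (hG : G.IsAcyclic) (hup : G.Adj u p)
    (hx : x ∈ G.side u p) (hy : y ∉ G.side u p) (hxy : G.Adj x y) : x = u ∧ y = p := by
  obtain rfl : y = p := by
    by_contra h
    exact hy (mem_compIn_of_adj hx (mem_erase.2 ⟨h, mem_univ _⟩) hxy)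
  exact ⟨hG.eq_of_mem_compIn_of_adj (notMem_erase y univ) hup.symm hx hxy.symm, rfl⟩

theorem IsAcyclic.side_subset_compl_side (hG : G.IsAcyclic) (hup : G.Adj u p) :
    G.side p u ⊆ univ \ G.side u p := by
  intro x hx
  obtain ⟨-, hpx⟩ := mem_compIn.1 hx
  clear hx
  induction hpx with
  | refl => exact mem_sdiff.2 ⟨mem_univ _, fun h => ne_of_mem_erase (compIn_subset h) rfl⟩
  | @tail a b _ hab ih =>
    refine mem_sdiff.2 ⟨mem_univ _, fun hb => ne_of_mem_erase hab.2.1 ?_⟩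
    exact (hG.eq_of_adj_of_mem_side hup hb (mem_sdiff.1 ih).2 hab.2.2.symm).1

theorem Connected.isIndepCut_singleton_of_card_side_le (hG : G.Connected)
    (hz : ∀ q, G.Adj q p → (G.side q p).card ≤ m) : G.IsIndepCut m univ {p} :=
  isIndepCut_singleton (mem_univ p) fun v hv => by
    obtain ⟨q, -, hqp, hvq⟩ :=
      (hG.preconnected v p).reachIn_univ.exists_adj_mem_side (ne_of_mem_erase hv)
    rw [compIn_eq_of_mem hvq]
    exact hz q hqp

theorem IsTree.exists_forall_card_side_le_or_exists_split (hG : G.IsTree) (m : ℕ) :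
    (∃ z, ∀ q, G.Adj q z → (G.side q z).card ≤ m) ∨
      ∃ u p, G.Adj u p ∧ m < (G.side u p).card ∧ m < (univ \ G.side u p).card := by
  classical
  by_cases hbig : ∃ u p, G.Adj u p ∧ m < (G.side u p).card
  swap
  · simp only [not_exists, not_and, not_lt] at hbig
    obtain ⟨z⟩ := hG.connected.nonempty
    exact .inl ⟨z, fun q hqz => hbig q z hqz⟩
  obtain ⟨⟨u, p⟩, hmem, hmin⟩ := exists_min_image
    (univ.filter fun e : V × V => G.Adj e.1 e.2 ∧ m < (G.side e.1 e.2).card)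
    (fun e => (G.side e.1 e.2).card)
    (by obtain ⟨u, p, h⟩ := hbig; exact ⟨(u, p), mem_filter.2 ⟨mem_univ _, h⟩⟩)
  obtain ⟨hup, hmA⟩ : G.Adj u p ∧ m < (G.side u p).card := (mem_filter.1 hmem).2
  by_cases hsplit : m < (univ \ G.side u p).card
  · exact .inr ⟨u, p, hup, hmA, hsplit⟩
  -- otherwise `u` is a centroid: the minimality of `side u p` bounds the other sides at `u`
  refine .inl ⟨u, fun c hcu => ?_⟩
  obtain rfl | hcp := eq_or_ne c p
  · exact (card_le_card (hG.isAcyclic.side_subset_compl_side hup)).trans (not_lt.1 hsplit)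
  by_contra h
  have h₁ : (G.side u p).card ≤ (G.side c u).card :=
    hmin (c, u) (mem_filter.2 ⟨mem_univ _, hcu, not_le.1 h⟩)
  have h₂ := card_lt_card ((hG.isAcyclic.side_subset_erase_side hcu.symm hup hcp).trans_ssubset
    (erase_ssubset (mem_compIn_self (mem_erase.2 ⟨hup.ne, mem_univ u⟩))))
  omega

theorem IsTree.exists_isIndepCut_card_le_of_split (hG : G.IsTree) {a : ℕ} (hm : 1 ≤ m)
    (hup : G.Adj u p) (hu : m < (G.side u p).card) (hp : m < (univ \ G.side u p).card)
    (hn : Fintype.card V + 1 ≤ 2 * a + 2 * m) :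
    ∃ I : Finset V, I.card ≤ a ∧ G.IsIndepCut m univ I := by
  obtain ⟨U₁, W₁, h₁⟩ : ∃ U W, G.IsCutPair m (G.side u p) u U W :=
    hG.isAcyclic.exists_isCutPair hm (mem_erase.2 ⟨hup.ne, mem_univ u⟩)
  obtain ⟨U₂, W₂, h₂⟩ := hG.isAcyclic.exists_isCutPair (S := univ \ G.side u p) hm
    (mem_sdiff.2 ⟨mem_univ p, fun h => ne_of_mem_erase (compIn_subset h) rfl⟩)
  rw [hG.connected.compIn_compl_side hup] at h₂
  have huniv : G.side u p ∪ (univ \ G.side u p) = univ := union_sdiff_of_subset (subset_univ _)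
  have hcross : ∀ x ∈ G.side u p, ∀ y ∈ univ \ G.side u p, G.Adj x y → x = u ∧ y = p :=
    fun x hx y hy hxy => hG.isAcyclic.eq_of_adj_of_mem_side hup hx (mem_sdiff.1 hy).2 hxy
  have hU : G.IsIndepCut m univ (U₁ ∪ W₂) := huniv ▸ h₁.cut_left.union h₂.cut_right
    disjoint_sdiff
    (fun x hx y hy hxy => h₂.notMem_right
      ((hcross x (h₁.cut_left.subset hx) y (h₂.cut_right.subset hy) hxy).2 ▸ hy))
    (fun x hx y hy hxy => (mem_sdiff.1 hx).2
      ((hcross x (mem_sdiff.1 hx).1 y (mem_sdiff.1 hy).1 hxy).1 ▸ h₁.mem_left))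
  have hW : G.IsIndepCut m univ (W₁ ∪ U₂) := huniv ▸ h₁.cut_right.union h₂.cut_left
    disjoint_sdiff
    (fun x hx y hy hxy => h₁.notMem_right
      ((hcross x (h₁.cut_right.subset hx) y (h₂.cut_left.subset hy) hxy).1 ▸ hx))
    (fun x hx y hy hxy => (mem_sdiff.1 hy).2
      ((hcross x (mem_sdiff.1 hx).1 y (mem_sdiff.1 hy).1 hxy).2 ▸ h₂.mem_left))
  have hcard : (G.side u p).card + (univ \ G.side u p).card = Fintype.card V := by
    rw [← card_union_of_disjoint disjoint_sdiff, huniv, card_univ]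
  have := card_union_le U₁ W₂
  have := card_union_le W₁ U₂
  have := h₁.card_add_le
  have := h₂.card_add_le
  by_cases hUa : (U₁ ∪ W₂).card ≤ a
  · exact ⟨_, hUa, hU⟩
  · exact ⟨_, by omega, hW⟩

theorem IsTree.exists_isIndepCut_card_le (hG : G.IsTree) {a : ℕ} (hm : 1 ≤ m) (ha : 1 ≤ a)
    (hn : Fintype.card V + 1 ≤ 2 * a + 2 * m) :
    ∃ I : Finset V, I.card ≤ a ∧ G.IsIndepCut m univ I := by
  rcases hG.exists_forall_card_side_le_or_exists_split m with ⟨z, hz⟩ | ⟨u, p, hup, hu, hp⟩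
  · exact ⟨{z}, by simpa using ha, hG.connected.isIndepCut_singleton_of_card_side_le hz⟩
  · exact hG.exists_isIndepCut_card_le_of_split hm hup hu hp hn

theorem IsIndepCut.ncard_reachable_le {I : Finset V} (h : G.IsIndepCut m univ I)
    (v : {x : V | x ∉ I}) :
    Set.ncard {w : {x : V | x ∉ I} | (G.induce {x | x ∉ I}).Reachable v w} ≤ m := by
  obtain ⟨C, hCI, hvC, hCm, hC⟩ := h.small v (mem_sdiff.2 ⟨mem_univ _, v.2⟩)
  have hreach : ∀ w, (G.induce {x | x ∉ I}).Reachable v w → (w : V) ∈ C := by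
    intro w hw
    replace hw := (reachable_iff_reflTransGen v w).1 hw
    induction hw with
    | refl => exact hvC
    | @tail b c _ hbc ih => exact hC b ih c (mem_sdiff.2 ⟨mem_univ _, c.2⟩) hbc
  calc _ ≤ (C : Set V).ncard :=
        Set.ncard_le_ncard_of_injOn Subtype.val (fun w hw => hreach w hw)
          Subtype.val_injective.injOn
    _ = C.card := Set.ncard_coe_finset C
    _ ≤ m := hCm

end Side

end DecidableEq

end SimpleGraph

theorem stmt9_general (k : ℕ)
    {V : Type} [Fintype V] (T : SimpleGraph V)
    (htree : T.IsTree)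
    (hcard : Fintype.card V = 2 * k ∨ Fintype.card V = 2 * k + 1)
    (a : ℕ) (ha1 : 1 ≤ a) :
    ∃ I : Finset V, I.card ≤ a ∧ (∀ x ∈ I, ∀ y ∈ I, ¬ T.Adj x y) ∧
      ∀ v : ↥{x : V | x ∉ I},
        Set.ncard {w : ↥{x : V | x ∉ I} |
          (T.induce {x : V | x ∉ I}).Reachable v w} ≤ k - a + 1 := by
  classical
  obtain ⟨I, hIa, hI⟩ :=
    htree.exists_isIndepCut_card_le (m := k - a + 1) le_add_self ha1 (by omega)
  exact ⟨I, hIa, hI.indep, hI.ncard_reachable_le⟩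

theorem stmt9 (k : ℕ) (hk : 1 ≤ k)
    {V : Type} [Fintype V] [DecidableEq V] (T : SimpleGraph V)
    (htree : T.IsTree)
    (hcard : Fintype.card V = 2 * k ∨ Fintype.card V = 2 * k + 1)
    (A : Finset V) (hA : A.card = k)
    (hAind : ∀ x ∈ A, ∀ y ∈ A, ¬ T.Adj x y)
    (hAcind : ∀ x ∈ Aᶜ, ∀ y ∈ Aᶜ, ¬ T.Adj x y)
    (a : ℕ) (ha1 : 1 ≤ a) (ha2 : a ≤ k) :
    ∃ I : Finset V, I.card ≤ a ∧ (∀ x ∈ I, ∀ y ∈ I, ¬ T.Adj x y) ∧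
      ∀ v : ↥{x : V | x ∉ I},
        Set.ncard {w : ↥{x : V | x ∉ I} |
          (T.induce {x : V | x ∉ I}).Reachable v w} ≤ k - a + 1 :=
  stmt9_general k T htree hcard a ha1
end

section
/- Let k ≥ 2 be an integer and let T be a balanced tree on 2k or 2k+1 vertices. Let G be a graph whose vertex set is partitioned into two nonempty sets A and B such that: every pair consisting of a vertex of A and a vertex of B is joined by an edge, B is an independent set in G, and the induced subgraph G[A] is a vertex-disjoint union of copies of the complete bipartite graph K_{k−1,k−1} covering all of A (so in particular 2(k−1) divides |A|). Then G contains no subgraph isomorphic to the suspension T̂. -/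
lemma twocolor {V : Type*} {G : SimpleGraph V} (hconn : G.Connected)
    (c₁ c₂ : V → Bool) (h₁ : ∀ {x y}, G.Adj x y → c₁ x ≠ c₁ y)
    (h₂ : ∀ {x y}, G.Adj x y → c₂ x ≠ c₂ y) (x y : V) :
    (c₁ x = c₁ y) ↔ (c₂ x = c₂ y) := by
  obtain ⟨w⟩ := hconn.preconnected x y
  induction w with
  | nil => simp
  | @cons u v z h p ih =>
    have a1 := h₁ h
    have a2 := h₂ h
    revert a1 a2 ih
    cases c₁ u <;> cases c₁ v <;> cases c₂ u <;> cases c₂ v <;>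
      cases c₁ z <;> cases c₂ z <;> simp_all

theorem stmt17 (k : ℕ) (hk : 2 ≤ k)
    {V : Type} [Fintype V] [DecidableEq V] (T : SimpleGraph V)
    (htree : T.IsTree)
    (hcard : Fintype.card V = 2 * k ∨ Fintype.card V = 2 * k + 1)
    (C : Finset V) (hC : C.card = k)
    (hCind : ∀ x ∈ C, ∀ y ∈ C, ¬ T.Adj x y)
    (hCcind : ∀ x ∈ Cᶜ, ∀ y ∈ Cᶜ, ¬ T.Adj x y)
    {W : Type} [Fintype W] [DecidableEq W]
    (G : SimpleGraph W) (A : Finset W)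
    (hAne : A.Nonempty) (hBne : Aᶜ.Nonempty)
    -- every vertex of `A` is joined to every vertex of `B = Aᶜ`
    (hcomplete : ∀ x ∈ A, ∀ y ∈ Aᶜ, G.Adj x y)
    -- `B = Aᶜ` is an independent set
    (hBind : ∀ x ∈ Aᶜ, ∀ y ∈ Aᶜ, ¬ G.Adj x y)
    -- `G[A]` is a vertex-disjoint union of copies of `K_{k-1,k-1}` covering `A`
    (P : Finpartition A)
    (hparts : ∀ p ∈ P.parts, Nonempty
      ((G.induce (↑p : Set W)) ≃g
        completeBipartiteGraph (Fin (k - 1)) (Fin (k - 1))))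
    (hcross : ∀ p ∈ P.parts, ∀ x ∈ p, ∀ y ∈ A, y ∉ p → ¬ G.Adj x y) :
    ¬ ∃ f : suspension T →g G, Function.Injective f := by
  rintro ⟨f, hf⟩
  classical
  have hadj_apex : ∀ a : V, (suspension T).Adj none (some a) := fun a => by
    rw [suspension, SimpleGraph.fromRel_adj]
    exact ⟨by simp, Or.inl (Or.inl rfl)⟩
  have hadj_some : ∀ {a b : V}, T.Adj a b → (suspension T).Adj (some a) (some b) := by
    intro a b h
    rw [suspension, SimpleGraph.fromRel_adj]
    exact ⟨by simpa using h.ne, Or.inl (Or.inr ⟨a, b, rfl, rfl, h⟩)⟩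
  set v₀ := f none with hv₀def
  have hGadj_apex : ∀ a : V, G.Adj v₀ (f (some a)) := fun a => f.map_adj (hadj_apex a)
  have hGadj : ∀ {a b : V}, T.Adj a b → G.Adj (f (some a)) (f (some b)) :=
    fun h => f.map_adj (hadj_some h)
  have hVcard : 2 * k ≤ Fintype.card V := by rcases hcard with h | h <;> omega
  have hVne : Nonempty V := Fintype.card_pos_iff.mp (by omega)
  have hpcard : ∀ p ∈ P.parts, p.card = 2 * (k - 1) := by
    intro p hp
    obtain ⟨e⟩ := hparts p hp
    have h1 := Fintype.card_congr e.toEquiv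
    simp only [Fintype.card_sum, Fintype.card_fin] at h1
    have h2 : p.card = k - 1 + (k - 1) := by simpa using h1
    omega
  by_cases hv₀A : v₀ ∈ A
  · -- apex in A
    obtain ⟨p₀, hp₀, hv₀p⟩ := P.exists_mem hv₀A
    obtain ⟨e⟩ := hparts p₀ hp₀
    have hmemp : ∀ a : V, f (some a) ∈ A → f (some a) ∈ p₀ := by
      intro a ha
      by_contra h
      exact hcross p₀ hp₀ v₀ hv₀p _ ha h (hGadj_apex a)
    have hv₀p' : v₀ ∈ (↑p₀ : Set W) := hv₀p
    have hadjK : ∀ (a : V) (ha : f (some a) ∈ (↑p₀ : Set W)),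
        (completeBipartiteGraph (Fin (k-1)) (Fin (k-1))).Adj (e ⟨v₀, hv₀p'⟩)
          (e ⟨f (some a), ha⟩) :=
      fun a ha => e.map_rel_iff.mpr (hGadj_apex a)
    have hnotboth : ∀ {a b : V}, T.Adj a b → f (some a) ∈ A → f (some b) ∈ A → False := by
      intro a b hab ha hb
      have hap : f (some a) ∈ (↑p₀ : Set W) := hmemp a ha
      have hbp : f (some b) ∈ (↑p₀ : Set W) := hmemp b hb
      have h1 := hadjK a hap
      have h2 := hadjK b hbp
      have h3 : (completeBipartiteGraph (Fin (k-1)) (Fin (k-1))).Adj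
          (e ⟨f (some a), hap⟩) (e ⟨f (some b), hbp⟩) := e.map_rel_iff.mpr (hGadj hab)
      generalize e ⟨v₀, hv₀p'⟩ = u at h1 h2
      generalize e ⟨f (some a), hap⟩ = x at h1 h3
      generalize e ⟨f (some b), hbp⟩ = y at h2 h3
      cases u <;> cases x <;> cases y <;> simp_all [completeBipartiteGraph]
    have key : ∀ x y : V, (decide (x ∈ C) = decide (y ∈ C)) ↔
        (decide (f (some x) ∈ A) = decide (f (some y) ∈ A)) := by
      apply twocolor htree.isConnected
      · intro x y hxy h
        have hiff : (x ∈ C) ↔ (y ∈ C) := by simpa [decide_eq_decide] using h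
        by_cases hx : x ∈ C
        · exact hCind x hx y (hiff.mp hx) hxy
        · exact hCcind x (Finset.mem_compl.mpr hx) y
            (Finset.mem_compl.mpr (fun hy => hx (hiff.mpr hy))) hxy
      · intro x y hxy h
        have hiff : (f (some x) ∈ A) ↔ (f (some y) ∈ A) := by
          simpa [decide_eq_decide] using h
        by_cases hx : f (some x) ∈ A
        · exact hnotboth hxy hx (hiff.mp hx)
        · exact hBind _ (Finset.mem_compl.mpr hx) _
            (Finset.mem_compl.mpr (fun hy => hx (hiff.mpr hy))) (hGadj hxy)
    set D : Finset V := Finset.univ.filter (fun a => f (some a) ∈ A) with hD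
    have hub : D.card ≤ k - 1 := by
      set gg : V → (Fin (k-1) ⊕ Fin (k-1)) :=
        fun a => if h : f (some a) ∈ (↑p₀ : Set W) then e ⟨f (some a), h⟩ else e ⟨v₀, hv₀p'⟩
        with hgg
      have hmemD : ∀ a ∈ D, f (some a) ∈ (↑p₀ : Set W) := by
        intro a ha
        simp only [hD, Finset.mem_filter] at ha
        exact hmemp a ha.2
      have hinj : (↑D : Set V).InjOn gg := by
        intro a ha b hb hab
        simp only [hgg] at hab
        rw [dif_pos (hmemD a (Finset.mem_coe.mp ha)),
          dif_pos (hmemD b (Finset.mem_coe.mp hb))] at hab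
        have h2 := Subtype.ext_iff.mp (e.injective hab)
        exact Option.some_injective V (hf h2)
      rcases hu : e ⟨v₀, hv₀p'⟩ with i | i
      · have hmapsto : ∀ a ∈ D, gg a ∈ (Finset.univ.map ⟨Sum.inr, Sum.inr_injective⟩ :
            Finset (Fin (k-1) ⊕ Fin (k-1))) := by
          intro a ha
          have hap := hmemD a ha
          have hK := hadjK a hap
          rw [hu] at hK
          simp only [hgg, dif_pos hap]
          rcases hx : e ⟨f (some a), hap⟩ with x | x
          · rw [hx] at hK
            simp [completeBipartiteGraph] at hK
          · simp
        have h3 := Finset.card_le_card_of_injOn gg hmapsto hinj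
        simpa using h3
      · have hmapsto : ∀ a ∈ D, gg a ∈ (Finset.univ.map ⟨Sum.inl, Sum.inl_injective⟩ :
            Finset (Fin (k-1) ⊕ Fin (k-1))) := by
          intro a ha
          have hap := hmemD a ha
          have hK := hadjK a hap
          rw [hu] at hK
          simp only [hgg, dif_pos hap]
          rcases hx : e ⟨f (some a), hap⟩ with x | x
          · simp
          · rw [hx] at hK
            simp [completeBipartiteGraph] at hK
        have h3 := Finset.card_le_card_of_injOn gg hmapsto hinj
        simpa using h3
    have hC0 : C.Nonempty := by rw [← Finset.card_pos, hC]; omega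
    obtain ⟨x₀, hx₀⟩ := hC0
    have hlb : k ≤ D.card := by
      by_cases h₀ : f (some x₀) ∈ A
      · have hDC : D = C := by
          ext x
          have hkey := key x x₀
          simp only [decide_eq_decide] at hkey
          simp only [hD, Finset.mem_filter, Finset.mem_univ, true_and]
          rw [iff_comm]
          constructor
          · intro hx; exact (hkey.mp (iff_of_true hx hx₀)).mpr h₀
          · intro hx
            by_contra hxc
            exact hxc ((hkey.mpr (iff_of_true hx h₀)).mpr hx₀)
        rw [hDC, hC]
      · have hDC : D = Cᶜ := by
          ext x
          have hkey := key x x₀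
          simp only [decide_eq_decide] at hkey
          simp only [hD, Finset.mem_filter, Finset.mem_univ, true_and, Finset.mem_compl]
          constructor
          · intro hx hxc
            exact h₀ ((hkey.mp (iff_of_true hxc hx₀)).mp hx)
          · intro hx
            by_contra hfx
            exact hx ((hkey.mpr (iff_of_false hfx h₀)).mpr hx₀)
        rw [hDC, Finset.card_compl, hC]
        omega
    omega
  · -- apex in B
    have hv₀B : v₀ ∈ Aᶜ := Finset.mem_compl.mpr hv₀A
    have himgA : ∀ a : V, f (some a) ∈ A := by
      intro a
      by_contra h
      exact hBind v₀ hv₀B _ (Finset.mem_compl.mpr h) (hGadj_apex a)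
    obtain ⟨a₀⟩ := hVne
    obtain ⟨p₀, hp₀, hmem₀⟩ := P.exists_mem (himgA a₀)
    have step : ∀ {x y : V}, T.Adj x y → f (some x) ∈ p₀ → f (some y) ∈ p₀ := by
      intro x y h hx
      by_contra hny
      exact hcross p₀ hp₀ _ hx _ (himgA y) hny (hGadj h)
    have keyw : ∀ {u z : V} (_ : T.Walk u z), f (some u) ∈ p₀ → f (some z) ∈ p₀ := by
      intro u z w
      induction w with
      | nil => exact id
      | cons h _ ih => exact fun hu => ih (step h hu)
    have hall : ∀ a : V, f (some a) ∈ p₀ := by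
      intro a
      obtain ⟨w⟩ := htree.isConnected.preconnected a₀ a
      exact keyw w hmem₀
    have hle : Fintype.card V ≤ p₀.card := by
      have h1 := Finset.card_le_card_of_injOn (s := Finset.univ) (fun a => f (some a))
        (fun a _ => hall a)
        (fun a _ b _ hab => Option.some_injective V (hf hab))
      simpa using h1
    have := hpcard p₀ hp₀
    omega
end
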